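/- arXiv:2301.00354 — 4 statements merged into one kernel-verified Lean document; each statement's English description precedes it below -/
import Mathlib

section
/- Let 0 ≤ M < 1 and α = (1+M)/2. Suppose for every edge e, |Conf∞(e) − Conf^{t−1}(e)| ≤ α^{t−1}, and suppose R^t(u) is the average of Conf^{t−1} over Out(u), T^t(v) is the average of Score·Conf^{t−1} over In(v) with |Score| ≤ M, and likewise for the fixed point quantities. Then |R∞(u) − R^t(u)| ≤ α^{t−1} for all payers u and |T∞(v) − T^t(v)| ≤ M·α^{t−1} ≤ α^{t−1} for all payees v, and consequently |Conf∞(e) − Conf^t(e)| ≤ (α^{t−1} + M·α^{t−1})/2 = α^t for every edge e, where Conf^t(u,v) = (R^t(u) + 1 − |Score(u,v) − T^t(v)|)/2. -/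
theorem riskprop_iteration_bound
    {U V E : Type*} (p : E → U) (q : E → V)
    (Out : U → Finset E) (In : V → Finset E)
    (hOut : ∀ u, (Out u).Nonempty) (hIn : ∀ v, (In v).Nonempty)
    (M α : ℝ) (hM0 : 0 ≤ M) (hM1 : M < 1) (hα : α = (1 + M) / 2)
    (Score : E → ℝ) (hScore : ∀ e, |Score e| ≤ M)
    (ConfInf Conft1 : E → ℝ) (RInf Rt : U → ℝ) (TInf Tt : V → ℝ)
    (t : ℕ) (ht : 1 ≤ t)
    -- fixed-point equations
    (hRInf : ∀ u, RInf u = (∑ e ∈ Out u, ConfInf e) / (Out u).card)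
    (hTInf : ∀ v, TInf v = (∑ e ∈ In v, Score e * ConfInf e) / (In v).card)
    (hConfInf : ∀ e, ConfInf e = (RInf (p e) + (1 - |Score e - TInf (q e)|)) / 2)
    -- iteration equations
    (hRt : ∀ u, Rt u = (∑ e ∈ Out u, Conft1 e) / (Out u).card)
    (hTt : ∀ v, Tt v = (∑ e ∈ In v, Score e * Conft1 e) / (In v).card)
    -- inductive hypothesis
    (hprev : ∀ e, |ConfInf e - Conft1 e| ≤ α ^ (t - 1)) :
    (∀ u, |RInf u - Rt u| ≤ α ^ (t - 1))
    ∧ (∀ v, |TInf v - Tt v| ≤ M * α ^ (t - 1) ∧ M * α ^ (t - 1) ≤ α ^ (t - 1))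
    ∧ (∀ e, |ConfInf e - (Rt (p e) + (1 - |Score e - Tt (q e)|)) / 2|
        ≤ (α ^ (t - 1) + M * α ^ (t - 1)) / 2
      ∧ (α ^ (t - 1) + M * α ^ (t - 1)) / 2 = α ^ t) := by
  have hα0 : 0 ≤ α := by rw [hα]; linarith
  have ha0 : 0 ≤ α ^ (t - 1) := pow_nonneg hα0 _
  have hMle : M * α ^ (t - 1) ≤ α ^ (t - 1) := by
    nlinarith [ha0]
  have hR : ∀ u, |RInf u - Rt u| ≤ α ^ (t - 1) := by
    intro u
    rw [hRInf, hRt, div_sub_div_same, ← Finset.sum_sub_distrib]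
    have hcard : (0:ℝ) < (Out u).card := by
      exact_mod_cast Finset.card_pos.mpr (hOut u)
    rw [abs_div, abs_of_pos hcard, div_le_iff₀ hcard]
    calc |∑ e ∈ Out u, (ConfInf e - Conft1 e)|
        ≤ ∑ e ∈ Out u, |ConfInf e - Conft1 e| := Finset.abs_sum_le_sum_abs _ _
      _ ≤ ∑ _e ∈ Out u, α ^ (t - 1) := Finset.sum_le_sum fun e _ => hprev e
      _ = α ^ (t - 1) * (Out u).card := by rw [Finset.sum_const, nsmul_eq_mul, mul_comm]
  have hT : ∀ v, |TInf v - Tt v| ≤ M * α ^ (t - 1) := by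
    intro v
    rw [hTInf, hTt, div_sub_div_same, ← Finset.sum_sub_distrib]
    have hcard : (0:ℝ) < (In v).card := by
      exact_mod_cast Finset.card_pos.mpr (hIn v)
    rw [abs_div, abs_of_pos hcard, div_le_iff₀ hcard]
    calc |∑ e ∈ In v, (Score e * ConfInf e - Score e * Conft1 e)|
        ≤ ∑ e ∈ In v, |Score e * ConfInf e - Score e * Conft1 e| :=
          Finset.abs_sum_le_sum_abs _ _
      _ ≤ ∑ _e ∈ In v, M * α ^ (t - 1) := by
          refine Finset.sum_le_sum fun e _ => ?_
          rw [← mul_sub, abs_mul]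
          exact mul_le_mul (hScore e) (hprev e) (abs_nonneg _) hM0
      _ = M * α ^ (t - 1) * (In v).card := by rw [Finset.sum_const, nsmul_eq_mul, mul_comm]
  refine ⟨hR, fun v => ⟨hT v, hMle⟩, fun e => ⟨?_, ?_⟩⟩
  · have h1 := hR (p e)
    have h2 := hT (q e)
    have h3 : |(|Score e - TInf (q e)| - |Score e - Tt (q e)|)| ≤ |TInf (q e) - Tt (q e)| := by
      have := abs_abs_sub_abs_le_abs_sub (Score e - TInf (q e)) (Score e - Tt (q e))
      simpa [abs_sub_comm] using this
    have h2' : |TInf (q e) - Tt (q e)| ≤ M * α ^ (t - 1) := hT (q e)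
    rw [hConfInf e]
    rw [abs_le] at h1 h3 ⊢
    constructor
    · linarith [h1.1, h3.2, h2']
    · linarith [h1.2, h3.1, h2']
  · have hts : α ^ t = α ^ (t - 1) * α := by
      rw [← pow_succ]; congr 1; omega
    rw [hts, hα]; ring
end

section
/- Uniqueness of the RiskProp fixed point: let 0 ≤ M < 1, α = (1+M)/2, and suppose (Conf₁, R₁, T₁) and (Conf₂, R₂, T₂) both satisfy the fixed-point equations T_i(v) = (Σ_{e∈In(v)} Score(e)·Conf_i(e))/|In(v)|, R_i(u) = (Σ_{e∈Out(u)} Conf_i(e))/|Out(u)|, Conf_i(u,v) = (R_i(u) + 1 − |Score(u,v) − T_i(v)|)/2, with |Score(e)| ≤ M for all edges e of a finite graph. Then Conf₁ = Conf₂, R₁ = R₂, and T₁ = T₂. -/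
theorem riskprop_fixed_point_unique
    {U V E : Type*} [Fintype E]
    (p : E → U) (q : E → V)
    (Out : U → Finset E) (In : V → Finset E)
    (hOut : ∀ u, (Out u).Nonempty) (hIn : ∀ v, (In v).Nonempty)
    (M : ℝ) (hM0 : 0 ≤ M) (hM1 : M < 1)
    (Score : E → ℝ) (hScore : ∀ e, |Score e| ≤ M)
    (Conf₁ Conf₂ : E → ℝ) (R₁ R₂ : U → ℝ) (T₁ T₂ : V → ℝ)
    (hT₁ : ∀ v, T₁ v = (∑ e ∈ In v, Score e * Conf₁ e) / (In v).card)
    (hT₂ : ∀ v, T₂ v = (∑ e ∈ In v, Score e * Conf₂ e) / (In v).card)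
    (hR₁ : ∀ u, R₁ u = (∑ e ∈ Out u, Conf₁ e) / (Out u).card)
    (hR₂ : ∀ u, R₂ u = (∑ e ∈ Out u, Conf₂ e) / (Out u).card)
    (hC₁ : ∀ e, Conf₁ e = (R₁ (p e) + (1 - |Score e - T₁ (q e)|)) / 2)
    (hC₂ : ∀ e, Conf₂ e = (R₂ (p e) + (1 - |Score e - T₂ (q e)|)) / 2) :
    Conf₁ = Conf₂ ∧ R₁ = R₂ ∧ T₁ = T₂ := by
  have hconf : ∀ e, Conf₁ e = Conf₂ e := by
    by_cases hE : Nonempty E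
    · obtain ⟨e₀, -, hmax⟩ := Finset.exists_max_image Finset.univ
        (fun e => |Conf₁ e - Conf₂ e|) Finset.univ_nonempty
      set D := |Conf₁ e₀ - Conf₂ e₀| with hDdef
      have hD0 : 0 ≤ D := abs_nonneg _
      have bound : ∀ e, |Conf₁ e - Conf₂ e| ≤ D := fun e => hmax e (Finset.mem_univ e)
      have hRb : ∀ u, |R₁ u - R₂ u| ≤ D := by
        intro u
        have hcard : (0:ℝ) < (Out u).card := by
          exact_mod_cast Finset.card_pos.mpr (hOut u)
        rw [hR₁, hR₂, div_sub_div_same, ← Finset.sum_sub_distrib]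
        rw [abs_div, abs_of_pos hcard, div_le_iff₀ hcard]
        calc |∑ e ∈ Out u, (Conf₁ e - Conf₂ e)| ≤ ∑ e ∈ Out u, |Conf₁ e - Conf₂ e| :=
              Finset.abs_sum_le_sum_abs _ _
          _ ≤ ∑ _e ∈ Out u, D := Finset.sum_le_sum fun e _ => bound e
          _ = D * (Out u).card := by rw [Finset.sum_const, nsmul_eq_mul, mul_comm]
      have hTb : ∀ v, |T₁ v - T₂ v| ≤ M * D := by
        intro v
        have hcard : (0:ℝ) < (In v).card := by
          exact_mod_cast Finset.card_pos.mpr (hIn v)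
        rw [hT₁, hT₂, div_sub_div_same, ← Finset.sum_sub_distrib]
        rw [abs_div, abs_of_pos hcard, div_le_iff₀ hcard]
        calc |∑ e ∈ In v, (Score e * Conf₁ e - Score e * Conf₂ e)|
            ≤ ∑ e ∈ In v, |Score e * Conf₁ e - Score e * Conf₂ e| :=
              Finset.abs_sum_le_sum_abs _ _
          _ ≤ ∑ _e ∈ In v, M * D := by
              refine Finset.sum_le_sum fun e _ => ?_
              rw [← mul_sub, abs_mul]
              exact mul_le_mul (hScore e) (bound e) (abs_nonneg _) hM0
          _ = M * D * (In v).card := by rw [Finset.sum_const, nsmul_eq_mul, mul_comm]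
      have h3 : |(1 - |Score e₀ - T₁ (q e₀)|) - (1 - |Score e₀ - T₂ (q e₀)|)| ≤ M * D := by
        have h4 := abs_abs_sub_abs_le_abs_sub (Score e₀ - T₂ (q e₀)) (Score e₀ - T₁ (q e₀))
        have h5 : (Score e₀ - T₂ (q e₀)) - (Score e₀ - T₁ (q e₀)) = T₁ (q e₀) - T₂ (q e₀) := by
          ring
        have h6 : (1 - |Score e₀ - T₁ (q e₀)|) - (1 - |Score e₀ - T₂ (q e₀)|)
            = |Score e₀ - T₂ (q e₀)| - |Score e₀ - T₁ (q e₀)| := by ring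
        rw [h5] at h4
        rw [h6]
        exact h4.trans (hTb (q e₀))
      have hDle : D ≤ (D + M * D) / 2 := by
        have h1 := hRb (p e₀)
        have hsum : |(R₁ (p e₀) - R₂ (p e₀)) +
            ((1 - |Score e₀ - T₁ (q e₀)|) - (1 - |Score e₀ - T₂ (q e₀)|))| ≤ D + M * D :=
          (abs_add_le _ _).trans (add_le_add h1 h3)
        have he : Conf₁ e₀ - Conf₂ e₀ = ((R₁ (p e₀) - R₂ (p e₀)) +
            ((1 - |Score e₀ - T₁ (q e₀)|) - (1 - |Score e₀ - T₂ (q e₀)|))) / 2 := by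
          rw [hC₁ e₀, hC₂ e₀]; ring
        show |Conf₁ e₀ - Conf₂ e₀| ≤ (D + M * D) / 2
        rw [he, abs_div, show |(2:ℝ)| = 2 by norm_num]
        linarith
      have hD0' : D = 0 := by nlinarith
      intro e
      have := bound e
      rw [hD0'] at this
      have := abs_nonpos_iff.mp this
      linarith [this]
    · intro e; exact (hE ⟨e⟩).elim
  refine ⟨funext hconf, ?_, ?_⟩
  · funext u
    rw [hR₁, hR₂]
    congr 1
    exact Finset.sum_congr rfl fun e _ => hconf e
  · funext v
    rw [hT₁, hT₂]
    congr 1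
    exact Finset.sum_congr rfl fun e _ => by rw [hconf e]
end

section
/- The combined RiskProp update operator on confidence vectors is a contraction with ratio α = (1+M)/2 < 1 in the sup norm: if Conf and Conf' are any two confidence assignments on the edges of a finite bipartite graph and F denotes one full update (computing trustiness and reliability averages from the confidences and then the new confidences), then ‖F(Conf) − F(Conf')‖_∞ ≤ α·‖Conf − Conf'‖_∞. -/
lemma avg_diff_le' {E : Type*} (s : Finset E) (hs : s.Nonempty) (f g : E → ℝ) (B : ℝ)
    (h : ∀ e ∈ s, |f e - g e| ≤ B) :
    |(∑ e ∈ s, f e) / s.card - (∑ e ∈ s, g e) / s.card| ≤ B := by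
  have hc : (0:ℝ) < s.card := by exact_mod_cast Finset.card_pos.mpr hs
  rw [div_sub_div_same, abs_div, abs_of_pos hc, div_le_iff₀ hc]
  calc |∑ e ∈ s, f e - ∑ e ∈ s, g e| = |∑ e ∈ s, (f e - g e)| := by
        rw [Finset.sum_sub_distrib]
    _ ≤ ∑ e ∈ s, |f e - g e| := Finset.abs_sum_le_sum_abs _ _
    _ ≤ ∑ _e ∈ s, B := Finset.sum_le_sum h
    _ = B * s.card := by rw [Finset.sum_const, nsmul_eq_mul, mul_comm]

theorem riskprop_update_contraction
    {U V E : Type*} [Fintype E] [Nonempty E]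
    (p : E → U) (q : E → V)
    (Out : U → Finset E) (In : V → Finset E)
    (hOut : ∀ u, (Out u).Nonempty) (hIn : ∀ v, (In v).Nonempty)
    (M α : ℝ) (hM0 : 0 ≤ M) (hM1 : M < 1) (hα : α = (1 + M) / 2)
    (Score : E → ℝ) (hScore : ∀ e, |Score e| ≤ M)
    (F : (E → ℝ) → (E → ℝ))
    (hF : ∀ c : E → ℝ, ∀ e : E,
      F c e = ((∑ e' ∈ Out (p e), c e') / (Out (p e)).card
        + (1 - |Score e - (∑ e' ∈ In (q e), Score e' * c e') / (In (q e)).card|)) / 2)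
    (c c' : E → ℝ) :
    ‖F c - F c'‖ ≤ α * ‖c - c'‖ := by
  set d := ‖c - c'‖ with hd
  have hd0 : 0 ≤ d := norm_nonneg _
  have hα0 : 0 ≤ α := by rw [hα]; linarith
  have hce : ∀ e, |c e - c' e| ≤ d := by
    intro e
    have := norm_le_pi_norm (c - c') e
    simpa [Real.norm_eq_abs] using this
  rw [pi_norm_le_iff_of_nonneg (by positivity)]
  intro e
  have hR : |(∑ e' ∈ Out (p e), c e') / (Out (p e)).card
      - (∑ e' ∈ Out (p e), c' e') / (Out (p e)).card| ≤ d :=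
    avg_diff_le' _ (hOut _) _ _ _ (fun e' _ => hce e')
  have hT : |(∑ e' ∈ In (q e), Score e' * c e') / (In (q e)).card
      - (∑ e' ∈ In (q e), Score e' * c' e') / (In (q e)).card| ≤ M * d := by
    refine avg_diff_le' _ (hIn _) _ _ _ (fun e' _ => ?_)
    rw [← mul_sub, abs_mul]
    exact mul_le_mul (hScore e') (hce e') (abs_nonneg _) hM0
  set R := (∑ e' ∈ Out (p e), c e') / (Out (p e)).card
  set R' := (∑ e' ∈ Out (p e), c' e') / (Out (p e)).card
  set T := (∑ e' ∈ In (q e), Score e' * c e') / (In (q e)).card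
  set T' := (∑ e' ∈ In (q e), Score e' * c' e') / (In (q e)).card
  have habs : |(|Score e - T'| - |Score e - T|)| ≤ |T - T'| := by
    have h1 := abs_abs_sub_abs_le_abs_sub (Score e - T') (Score e - T)
    have h2 : Score e - T' - (Score e - T) = T - T' := by ring
    rwa [h2] at h1
  have key : |F c e - F c' e| ≤ α * d := by
    rw [hF, hF]
    have : ((R + (1 - |Score e - T|)) / 2 - (R' + (1 - |Score e - T'|)) / 2)
        = (R - R') / 2 + (|Score e - T'| - |Score e - T|) / 2 := by ring
    rw [this]
    calc |(R - R') / 2 + (|Score e - T'| - |Score e - T|) / 2|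
        ≤ |(R - R') / 2| + |(|Score e - T'| - |Score e - T|) / 2| := abs_add_le _ _
      _ = |R - R'| / 2 + |(|Score e - T'| - |Score e - T|)| / 2 := by
          rw [abs_div, abs_div]; norm_num
      _ ≤ d / 2 + |T - T'| / 2 := by gcongr
      _ ≤ d / 2 + (M * d) / 2 := by gcongr
      _ = α * d := by rw [hα]; ring
  simpa [Real.norm_eq_abs] using key
end

section
/- Existence of the RiskProp fixed point: for a finite directed bipartite graph with |Score(e)| ≤ M < 1 and all Out(u), In(v) nonempty, the update operator F on confidence assignments c : S → ℝ defined by F(c)(u,v) = (R_c(u) + 1 − |Score(u,v) − T_c(v)|)/2, with R_c and T_c the reliability/trustiness averages of c, has a unique fixed point in the complete metric space (ℝ^S, sup metric); this follows from the Banach fixed point theorem since F is an α-contraction with α = (1+M)/2 < 1. -/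
theorem riskprop_fixed_point_exists_unique
    {U V E : Type*} [Fintype E] [Nonempty E]
    (p : E → U) (q : E → V)
    (Out : U → Finset E) (In : V → Finset E)
    (hOut : ∀ u, (Out u).Nonempty) (hIn : ∀ v, (In v).Nonempty)
    (M : ℝ) (hM0 : 0 ≤ M) (hM1 : M < 1)
    (Score : E → ℝ) (hScore : ∀ e, |Score e| ≤ M) :
    ∃! c : E → ℝ, ∀ e : E,
      c e = ((∑ e' ∈ Out (p e), c e') / (Out (p e)).card
        + (1 - |Score e - (∑ e' ∈ In (q e), Score e' * c e') / (In (q e)).card|)) / 2 := by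
  set F : (E → ℝ) → (E → ℝ) := fun c e =>
    ((∑ e' ∈ Out (p e), c e') / (Out (p e)).card
      + (1 - |Score e - (∑ e' ∈ In (q e), Score e' * c e') / (In (q e)).card|)) / 2 with hF
  have hK0 : (0:ℝ) ≤ (1 + M) / 2 := by linarith
  set K : NNReal := ⟨(1 + M) / 2, hK0⟩ with hK
  have hcontr : ContractingWith K F := by
    constructor
    · show ((1 + M)/2 : ℝ) < 1
      linarith
    · apply LipschitzWith.of_dist_le_mul
      intro c c'
      have hKc : (K : ℝ) = (1 + M)/2 := rfl
      rw [dist_pi_le_iff (by positivity)]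
      intro e
      set d := dist c c' with hd
      have hd0 : 0 ≤ d := dist_nonneg
      have hcoord : ∀ e', |c e' - c' e'| ≤ d := fun e' => by
        have := dist_le_pi_dist c c' e'
        simpa [Real.dist_eq] using this
      -- bound average of c
      have havg : |(∑ e' ∈ Out (p e), c e') / (Out (p e)).card
          - (∑ e' ∈ Out (p e), c' e') / (Out (p e)).card| ≤ d := by
        have hcard : (0:ℝ) < (Out (p e)).card := by
          exact_mod_cast (hOut (p e)).card_pos
        rw [div_sub_div_same, ← Finset.sum_sub_distrib, abs_div, abs_of_pos hcard,
          div_le_iff₀ hcard]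
        calc |∑ e' ∈ Out (p e), (c e' - c' e')| ≤ ∑ e' ∈ Out (p e), |c e' - c' e'| :=
              Finset.abs_sum_le_sum_abs _ _
          _ ≤ ∑ e' ∈ Out (p e), d := Finset.sum_le_sum fun e' _ => hcoord e'
          _ = (Out (p e)).card * d := by rw [Finset.sum_const, nsmul_eq_mul]
          _ = d * (Out (p e)).card := mul_comm _ _
      -- bound trustiness difference
      have hT : |(∑ e' ∈ In (q e), Score e' * c e') / (In (q e)).card
          - (∑ e' ∈ In (q e), Score e' * c' e') / (In (q e)).card| ≤ M * d := by
        have hcard : (0:ℝ) < (In (q e)).card := by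
          exact_mod_cast (hIn (q e)).card_pos
        rw [div_sub_div_same, ← Finset.sum_sub_distrib, abs_div, abs_of_pos hcard,
          div_le_iff₀ hcard]
        calc |∑ e' ∈ In (q e), (Score e' * c e' - Score e' * c' e')|
            ≤ ∑ e' ∈ In (q e), |Score e' * c e' - Score e' * c' e'| :=
              Finset.abs_sum_le_sum_abs _ _
          _ ≤ ∑ e' ∈ In (q e), M * d := by
              apply Finset.sum_le_sum
              intro e' _
              rw [← mul_sub, abs_mul]
              exact mul_le_mul (hScore e') (hcoord e') (abs_nonneg _) hM0
          _ = (In (q e)).card * (M * d) := by rw [Finset.sum_const, nsmul_eq_mul]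
          _ = M * d * (In (q e)).card := mul_comm _ _
      have habs : abs (|Score e - (∑ e' ∈ In (q e), Score e' * c e') / (In (q e)).card|
          - |Score e - (∑ e' ∈ In (q e), Score e' * c' e') / (In (q e)).card|) ≤ M * d := by
        refine le_trans (abs_abs_sub_abs_le_abs_sub _ _) ?_
        have : Score e - (∑ e' ∈ In (q e), Score e' * c e') / (In (q e)).card
            - (Score e - (∑ e' ∈ In (q e), Score e' * c' e') / (In (q e)).card)
            = (∑ e' ∈ In (q e), Score e' * c' e') / (In (q e)).card
            - (∑ e' ∈ In (q e), Score e' * c e') / (In (q e)).card := by ring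
        rw [this, abs_sub_comm]
        exact hT
      have : dist (F c e) (F c' e) ≤ ((1 + M)/2) * d := by
        rw [Real.dist_eq]
        have expand : F c e - F c' e =
          ((∑ e' ∈ Out (p e), c e') / (Out (p e)).card
            - (∑ e' ∈ Out (p e), c' e') / (Out (p e)).card) / 2
          + (|Score e - (∑ e' ∈ In (q e), Score e' * c' e') / (In (q e)).card|
            - |Score e - (∑ e' ∈ In (q e), Score e' * c e') / (In (q e)).card|) / 2 := by
          simp only [hF]; ring
        rw [expand]
        calc _ ≤ |((∑ e' ∈ Out (p e), c e') / (Out (p e)).card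
              - (∑ e' ∈ Out (p e), c' e') / (Out (p e)).card) / 2|
            + |(|Score e - (∑ e' ∈ In (q e), Score e' * c' e') / (In (q e)).card|
              - |Score e - (∑ e' ∈ In (q e), Score e' * c e') / (In (q e)).card|) / 2| :=
              abs_add_le _ _
          _ ≤ d / 2 + (M * d) / 2 := by
              have h1 : |((∑ e' ∈ Out (p e), c e') / (Out (p e)).card
                  - (∑ e' ∈ Out (p e), c' e') / (Out (p e)).card) / 2| ≤ d / 2 := by
                rw [abs_div, abs_two]; gcongr
              have h2 : |(|Score e - (∑ e' ∈ In (q e), Score e' * c' e') / (In (q e)).card|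
                  - |Score e - (∑ e' ∈ In (q e), Score e' * c e') / (In (q e)).card|) / 2|
                  ≤ (M * d) / 2 := by
                rw [abs_div, abs_two]; gcongr; rw [abs_sub_comm]; exact habs
              linarith
          _ = ((1 + M)/2) * d := by ring
      simpa [hKc] using this
  have key : ∀ c : E → ℝ, (∀ e, c e = F c e) ↔ Function.IsFixedPt F c := by
    intro c
    constructor
    · intro h; funext e; exact (h e).symm
    · intro h e; exact congrFun h.symm e
  obtain ⟨c, hc, -⟩ := hcontr.exists_fixedPoint (Classical.arbitrary _) (edist_ne_top _ _)
  exact ⟨c, (key c).2 hc, fun c' hc' => hcontr.fixedPoint_unique' ((key c').1 hc') hc⟩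
end
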